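/- arXiv:1808.04181 — 2 statements merged into one kernel-verified Lean document; each statement's English description precedes it below -/
import Mathlib

section
/- Let x = a_i·v_i and y = a_j·v_j be two points in ℝ³ where v_i = K⁻¹u_i/‖K⁻¹u_i‖ and v_j = K⁻¹u_j/‖K⁻¹u_j‖ are unit vectors, and let d_{ij} = ‖x − y‖. Then (2a_i a_j/(a_i² + a_j² − d_{ij}²))² · (u_iᵀΩu_j)² = (u_iᵀΩu_i)(u_jᵀΩu_j), where Ω = K⁻ᵀK⁻¹; i.e. the image of the absolute conic satisfies the polynomial constraint u_iᵀΩu_i · u_jᵀΩu_j = γ_{ij}(u_iᵀΩu_j)² with γ_{ij} = (2a_i a_j/(a_i² + a_j² − d_{ij}²))². -/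
open Matrix

noncomputable def en (v : Fin 3 → ℝ) : EuclideanSpace ℝ (Fin 3) := WithLp.toLp 2 v

lemma en_inner (a b : Fin 3 → ℝ) : (inner ℝ (en a) (en b) : ℝ) = a ⬝ᵥ b := by
  simp [en, PiLp.inner_apply, dotProduct, mul_comm]

lemma omega_dot (K : Matrix (Fin 3) (Fin 3) ℝ) (a b : Fin 3 → ℝ) :
    a ⬝ᵥ (K⁻¹ᵀ * K⁻¹).mulVec b = (K⁻¹.mulVec a) ⬝ᵥ (K⁻¹.mulVec b) := by
  rw [← Matrix.mulVec_mulVec, Matrix.dotProduct_mulVec, Matrix.vecMul_transpose]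

/-- IAC polynomial constraint from a rigid pair:
`u_iᵀΩu_i · u_jᵀΩu_j = γ_{ij} (u_iᵀΩu_j)²` with
`γ_{ij} = (2 a_i a_j / (a_i² + a_j² − d_{ij}²))²`. -/
theorem iac_constraint
    (K : Matrix (Fin 3) (Fin 3) ℝ) (hK : IsUnit K.det)
    (ui uj : Fin 3 → ℝ)
    (hwi : K⁻¹.mulVec ui ≠ 0) (hwj : K⁻¹.mulVec uj ≠ 0)
    (ai aj : ℝ) (hai : 0 < ai) (haj : 0 < aj)
    (vi vj x y : EuclideanSpace ℝ (Fin 3)) (dij : ℝ)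
    (hvi : vi = ‖en (K⁻¹.mulVec ui)‖⁻¹ • en (K⁻¹.mulVec ui))
    (hvj : vj = ‖en (K⁻¹.mulVec uj)‖⁻¹ • en (K⁻¹.mulVec uj))
    (hx : x = ai • vi) (hy : y = aj • vj)
    (hd : dij = ‖x - y‖)
    (hne : ai ^ 2 + aj ^ 2 - dij ^ 2 ≠ 0)
    (Ω : Matrix (Fin 3) (Fin 3) ℝ) (hΩ : Ω = K⁻¹ᵀ * K⁻¹) :
    (2 * ai * aj / (ai ^ 2 + aj ^ 2 - dij ^ 2)) ^ 2 * (ui ⬝ᵥ Ω.mulVec uj) ^ 2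
      = (ui ⬝ᵥ Ω.mulVec ui) * (uj ⬝ᵥ Ω.mulVec uj) := by
  set wi := K⁻¹.mulVec ui with hwidef
  set wj := K⁻¹.mulVec uj with hwjdef
  have hni : ‖en wi‖ ≠ 0 := norm_ne_zero_iff.mpr (fun h => hwi (by simpa [en] using congrArg WithLp.ofLp h))
  have hnj : ‖en wj‖ ≠ 0 := norm_ne_zero_iff.mpr (fun h => hwj (by simpa [en] using congrArg WithLp.ofLp h))
  set ni := ‖en wi‖
  set nj := ‖en wj‖
  set s := wi ⬝ᵥ wj with hs
  have hΩij : ui ⬝ᵥ Ω.mulVec uj = s := by rw [hΩ, omega_dot]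
  have hΩii : ui ⬝ᵥ Ω.mulVec ui = ni ^ 2 := by
    rw [hΩ, omega_dot, ← en_inner, real_inner_self_eq_norm_sq]
  have hΩjj : uj ⬝ᵥ Ω.mulVec uj = nj ^ 2 := by
    rw [hΩ, omega_dot, ← en_inner, real_inner_self_eq_norm_sq]
  -- compute dij^2
  have hinner : (inner ℝ x y : ℝ) = ai * aj * (ni⁻¹ * nj⁻¹ * s) := by
    rw [hx, hy, hvi, hvj, real_inner_smul_left, real_inner_smul_right,
      real_inner_smul_left, real_inner_smul_right, en_inner]
    ring
  have hnx : ‖x‖ = ai := by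
    rw [hx, hvi, norm_smul, norm_smul, norm_inv, norm_norm,
      inv_mul_cancel₀ hni, mul_one, Real.norm_of_nonneg hai.le]
  have hny : ‖y‖ = aj := by
    rw [hy, hvj, norm_smul, norm_smul, norm_inv, norm_norm,
      inv_mul_cancel₀ hnj, mul_one, Real.norm_of_nonneg haj.le]
  have hd2 : dij ^ 2 = ai ^ 2 + aj ^ 2 - 2 * (ai * aj * (ni⁻¹ * nj⁻¹ * s)) := by
    have hinner' : (inner ℝ y x : ℝ) = ai * aj * (ni⁻¹ * nj⁻¹ * s) := by
      rw [real_inner_comm]; exact hinner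
    rw [hd, ← real_inner_self_eq_norm_sq, inner_sub_sub_self, hinner', hinner,
      real_inner_self_eq_norm_sq, real_inner_self_eq_norm_sq, hnx, hny]
    ring
  have hkey : ai ^ 2 + aj ^ 2 - dij ^ 2 = 2 * ai * aj * ni⁻¹ * nj⁻¹ * s := by
    rw [hd2]; ring
  have hsne : s ≠ 0 := by
    intro h; apply hne; rw [hkey, h, mul_zero]
  rw [hΩij, hΩii, hΩjj, hkey]
  field_simp
end

section
/- Suppose two views of the same point pair give sightline angles θ^k, θ^l and ray distances (a_i^k, a_j^k), (a_i^l, a_j^l). If the surface is isometric across views (equal inter-point distance d), then a_i^k² + a_j^k² − 2a_i^k a_j^k cos θ^k = a_i^l² + a_j^l² − 2a_i^l a_j^l cos θ^l; conversely this equality, with cos θ expressed via Ω as cos θ = u_iᵀΩu_j/√(u_iᵀΩu_i · u_jᵀΩu_j), yields a polynomial constraint on Ω from two views with the unknown d eliminated. -/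
open Matrix RealInnerProductSpace

lemma en_inner_s15 (x y : Fin 3 → ℝ) : ⟪en x, en y⟫ = x ⬝ᵥ y := by
  simp [en, EuclideanSpace.inner_eq_star_dotProduct, dotProduct, mul_comm]

lemma law_of_cos (a b : ℝ) (v w : EuclideanSpace ℝ (Fin 3))
    (hv : ‖v‖ = 1) (hw : ‖w‖ = 1) :
    ‖a • v - b • w‖ ^ 2 = a ^ 2 + b ^ 2 - 2 * a * b * ⟪v, w⟫ := by
  rw [norm_sub_sq_real, norm_smul, norm_smul, real_inner_smul_left,
    real_inner_smul_right, hv, hw]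
  simp only [mul_one, mul_pow, sq_abs, Real.norm_eq_abs]
  ring

lemma quad_form (A : Matrix (Fin 3) (Fin 3) ℝ) (x y : Fin 3 → ℝ) :
    x ⬝ᵥ (Aᵀ * A).mulVec y = ⟪en (A.mulVec x), en (A.mulVec y)⟫ := by
  rw [en_inner_s15, ← Matrix.mulVec_mulVec, Matrix.dotProduct_mulVec x Aᵀ,
    Matrix.vecMul_transpose]

lemma cos_eq (A : Matrix (Fin 3) (Fin 3) ℝ) (x y : Fin 3 → ℝ)
    (hx : A.mulVec x ≠ 0) (hy : A.mulVec y ≠ 0) :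
    (x ⬝ᵥ (Aᵀ * A).mulVec y)
      / Real.sqrt ((x ⬝ᵥ (Aᵀ * A).mulVec x) * (y ⬝ᵥ (Aᵀ * A).mulVec y))
    = ⟪(‖en (A.mulVec x)‖⁻¹ • en (A.mulVec x)),
       (‖en (A.mulVec y)‖⁻¹ • en (A.mulVec y))⟫ := by
  have hxn : ‖en (A.mulVec x)‖ ≠ 0 := by
    simpa [en, norm_ne_zero_iff] using hx
  have hyn : ‖en (A.mulVec y)‖ ≠ 0 := by
    simpa [en, norm_ne_zero_iff] using hy
  rw [quad_form, quad_form, quad_form, real_inner_self_eq_norm_sq,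
    real_inner_self_eq_norm_sq, real_inner_smul_left, real_inner_smul_right]
  rw [show ‖en (A.mulVec x)‖ ^ 2 * ‖en (A.mulVec y)‖ ^ 2
      = (‖en (A.mulVec x)‖ * ‖en (A.mulVec y)‖) ^ 2 by ring,
    Real.sqrt_sq (by positivity)]
  field_simp

/-- Cross-view isometry consistency: equality of inter-point distances across two views
yields the law-of-cosines identity with equal right-hand sides, and, expressing the
sightline cosines through the IAC `Ω = K⁻ᵀK⁻¹`, a polynomial constraint on `Ω` with the
unknown template distance `d` eliminated. -/
theorem cross_view_isometry_constraint
    (K : Matrix (Fin 3) (Fin 3) ℝ) (hK : IsUnit K.det)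
    (Ω : Matrix (Fin 3) (Fin 3) ℝ) (hΩ : Ω = K⁻¹ᵀ * K⁻¹)
    (uik ujk uil ujl : Fin 3 → ℝ)
    (hik : K⁻¹.mulVec uik ≠ 0) (hjk : K⁻¹.mulVec ujk ≠ 0)
    (hil : K⁻¹.mulVec uil ≠ 0) (hjl : K⁻¹.mulVec ujl ≠ 0)
    (aik ajk ail ajl : ℝ)
    (haik : 0 < aik) (hajk : 0 < ajk) (hail : 0 < ail) (hajl : 0 < ajl)
    (vik vjk vil vjl : EuclideanSpace ℝ (Fin 3))
    (hvik : vik = ‖en (K⁻¹.mulVec uik)‖⁻¹ • en (K⁻¹.mulVec uik))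
    (hvjk : vjk = ‖en (K⁻¹.mulVec ujk)‖⁻¹ • en (K⁻¹.mulVec ujk))
    (hvil : vil = ‖en (K⁻¹.mulVec uil)‖⁻¹ • en (K⁻¹.mulVec uil))
    (hvjl : vjl = ‖en (K⁻¹.mulVec ujl)‖⁻¹ • en (K⁻¹.mulVec ujl))
    (d : ℝ)
    (hdk : ‖aik • vik - ajk • vjk‖ = d)
    (hdl : ‖ail • vil - ajl • vjl‖ = d) :
    (aik ^ 2 + ajk ^ 2 - 2 * aik * ajk * ⟪vik, vjk⟫
      = ail ^ 2 + ajl ^ 2 - 2 * ail * ajl * ⟪vil, vjl⟫) ∧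
    (aik ^ 2 + ajk ^ 2
        - 2 * aik * ajk * ((uik ⬝ᵥ Ω.mulVec ujk)
            / Real.sqrt ((uik ⬝ᵥ Ω.mulVec uik) * (ujk ⬝ᵥ Ω.mulVec ujk)))
      = ail ^ 2 + ajl ^ 2
        - 2 * ail * ajl * ((uil ⬝ᵥ Ω.mulVec ujl)
            / Real.sqrt ((uil ⬝ᵥ Ω.mulVec uil) * (ujl ⬝ᵥ Ω.mulVec ujl)))) := by
  have unit : ∀ (u : Fin 3 → ℝ), K⁻¹.mulVec u ≠ 0 →
      ‖‖en (K⁻¹.mulVec u)‖⁻¹ • en (K⁻¹.mulVec u)‖ = 1 := by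
    intro u hu
    have : ‖en (K⁻¹.mulVec u)‖ ≠ 0 := by simpa [en, norm_ne_zero_iff] using hu
    simp [norm_smul, abs_of_nonneg (norm_nonneg _), this]
  have h1 : aik ^ 2 + ajk ^ 2 - 2 * aik * ajk * ⟪vik, vjk⟫
      = ail ^ 2 + ajl ^ 2 - 2 * ail * ajl * ⟪vil, vjl⟫ := by
    rw [← law_of_cos aik ajk vik vjk (hvik ▸ unit _ hik) (hvjk ▸ unit _ hjk),
      ← law_of_cos ail ajl vil vjl (hvil ▸ unit _ hil) (hvjl ▸ unit _ hjl),
      hdk, hdl]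
  refine ⟨h1, ?_⟩
  rw [hΩ, cos_eq K⁻¹ uik ujk hik hjk, cos_eq K⁻¹ uil ujl hil hjl,
    ← hvik, ← hvjk, ← hvil, ← hvjl]
  exact h1
end
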